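/- arXiv:2008.12026 — 2 statements merged into one kernel-verified Lean document; each statement's English description precedes it below -/
import Mathlib

section
/- Let Ω_1,...,Ω_N be Lebesgue measurable subsets of [0,1]^d with positive volume forming a partition (their union is [0,1]^d and pairwise intersections are Lebesgue-null). Then the identity (1/N) ∑_{i=1}^N |Ω_i ∩ [0,x]| / |Ω_i| = |[0,x]| holds for almost every x ∈ [0,1]^d if and only if the partition is equivolume, i.e. |Ω_1| = ... = |Ω_N| = 1/N. -/
open MeasureTheory Set
open scoped ENNReal

variable {d : ℕ}

lemma vol_Icc_toReal (x : Fin d → ℝ) :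
    (volume (Icc (0 : Fin d → ℝ) x)).toReal = ∏ i, max (x i) 0 := by
  rw [Real.volume_Icc_pi, ENNReal.toReal_prod]
  simp [ENNReal.toReal_ofReal']

lemma vol_Icc_ne_top (x : Fin d → ℝ) : volume (Icc (0 : Fin d → ℝ) x) ≠ ∞ := by
  rw [Real.volume_Icc_pi]
  exact (ENNReal.prod_lt_top (fun i _ => ENNReal.ofReal_lt_top)).ne

lemma contV : Continuous fun x : Fin d → ℝ => (volume (Icc (0 : Fin d → ℝ) x)).toReal := by
  simp only [vol_Icc_toReal]
  exact continuous_finset_prod _ fun i _ => (continuous_apply i).max continuous_const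

lemma key_step (A : Set (Fin d → ℝ)) (hA : volume A ≠ ∞) {a b : Fin d → ℝ} (hab : a ≤ b) :
    (volume (A ∩ Icc 0 b)).toReal - (volume (A ∩ Icc 0 a)).toReal ≤
    (volume (Icc (0 : Fin d → ℝ) b)).toReal - (volume (Icc (0 : Fin d → ℝ) a)).toReal := by
  have hsub : Icc (0 : Fin d → ℝ) a ⊆ Icc 0 b := Icc_subset_Icc_right hab
  have hd : volume (Icc (0 : Fin d → ℝ) b \ Icc 0 a)
      = volume (Icc (0 : Fin d → ℝ) b) - volume (Icc (0 : Fin d → ℝ) a) :=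
    measure_diff hsub measurableSet_Icc.nullMeasurableSet (vol_Icc_ne_top a)
  have h1 : volume (A ∩ Icc 0 b) ≤ volume (A ∩ Icc 0 a) + volume (Icc (0 : Fin d → ℝ) b \ Icc 0 a) := by
    refine le_trans (measure_mono ?_) (measure_union_le _ _)
    intro y hy
    by_cases h : y ∈ Icc (0 : Fin d → ℝ) a
    · exact Or.inl ⟨hy.1, h⟩
    · exact Or.inr ⟨hy.2, h⟩
  have fin1 : volume (A ∩ Icc 0 b) ≠ ∞ := (lt_of_le_of_lt (measure_mono inter_subset_left) hA.lt_top).ne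
  have fin2 : volume (A ∩ Icc 0 a) ≠ ∞ := (lt_of_le_of_lt (measure_mono inter_subset_left) hA.lt_top).ne
  have fin3 : volume (Icc (0 : Fin d → ℝ) b \ Icc 0 a) ≠ ∞ :=
    (lt_of_le_of_lt (measure_mono diff_subset) (vol_Icc_ne_top b).lt_top).ne
  have := ENNReal.toReal_mono (by finiteness) h1
  rw [ENNReal.toReal_add fin2 fin3] at this
  have hd' : (volume (Icc (0 : Fin d → ℝ) b \ Icc 0 a)).toReal
      = (volume (Icc (0 : Fin d → ℝ) b)).toReal - (volume (Icc (0 : Fin d → ℝ) a)).toReal := by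
    rw [hd, ENNReal.toReal_sub_of_le (measure_mono hsub) (vol_Icc_ne_top b)]
  linarith

lemma contF (A : Set (Fin d → ℝ)) (hA : volume A ≠ ∞) :
    Continuous fun x : Fin d → ℝ => (volume (A ∩ Icc 0 x)).toReal := by
  set f := fun x : Fin d → ℝ => (volume (A ∩ Icc 0 x)).toReal with hf
  rw [continuous_iff_continuousAt]
  intro x₀
  have hmono : ∀ {a b : Fin d → ℝ}, a ≤ b → f a ≤ f b := by
    intro a b hab
    exact ENNReal.toReal_mono (lt_of_le_of_lt (measure_mono inter_subset_left) hA.lt_top).ne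
      (measure_mono (inter_subset_inter_right _ (Icc_subset_Icc_right hab)))
  have hbound : ∀ y, |f y - f x₀| ≤
      (volume (Icc (0 : Fin d → ℝ) (x₀ ⊔ y))).toReal - (volume (Icc (0 : Fin d → ℝ) (x₀ ⊓ y))).toReal := by
    intro y
    have h1 : f y - f x₀ ≤ f (x₀ ⊔ y) - f (x₀ ⊓ y) :=
      sub_le_sub (hmono le_sup_right) (hmono inf_le_left)
    have h2 : f x₀ - f y ≤ f (x₀ ⊔ y) - f (x₀ ⊓ y) :=
      sub_le_sub (hmono le_sup_left) (hmono inf_le_right)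
    have h3 := key_step A hA (inf_le_sup : x₀ ⊓ y ≤ x₀ ⊔ y)
    rw [abs_sub_le_iff]
    constructor <;> linarith
  have hg : Filter.Tendsto (fun y => (volume (Icc (0 : Fin d → ℝ) (x₀ ⊔ y))).toReal
      - (volume (Icc (0 : Fin d → ℝ) (x₀ ⊓ y))).toReal) (nhds x₀) (nhds 0) := by
    have hc : Continuous (fun y : Fin d → ℝ => (volume (Icc (0 : Fin d → ℝ) (x₀ ⊔ y))).toReal
        - (volume (Icc (0 : Fin d → ℝ) (x₀ ⊓ y))).toReal) :=
      (contV.comp (continuous_pi fun i => (continuous_const.max (continuous_apply i)))).sub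
        (contV.comp (continuous_pi fun i => (continuous_const.min (continuous_apply i))))
    have := hc.tendsto x₀
    simpa using this
  have : Filter.Tendsto (fun y => f y - f x₀) (nhds x₀) (nhds 0) :=
    squeeze_zero_norm hbound hg
  have := this.add_const (f x₀)
  simpa [ContinuousAt] using this

lemma pos_vol {x : Fin d → ℝ} (hx : x ∈ Icc (0 : Fin d → ℝ) 1) {U : Set (Fin d → ℝ)}
    (hU : IsOpen U) (hxU : x ∈ U) : 0 < volume (U ∩ Icc (0 : Fin d → ℝ) 1) := by
  set c : Fin d → ℝ := fun _ => (1/2 : ℝ) with hc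
  have hcI : c ∈ interior (Icc (0 : Fin d → ℝ) 1) := by
    have hopen : IsOpen (univ.pi fun _ : Fin d => Ioo (0:ℝ) 1) :=
      isOpen_set_pi finite_univ fun i _ => isOpen_Ioo
    have hsub : (univ.pi fun _ : Fin d => Ioo (0:ℝ) 1) ⊆ Icc (0 : Fin d → ℝ) 1 := by
      intro y hy
      exact ⟨fun i => (hy i (mem_univ i)).1.le, fun i => (hy i (mem_univ i)).2.le⟩
    exact interior_maximal hsub hopen (fun i _ => by norm_num)
  have hconv : Convex ℝ (Icc (0 : Fin d → ℝ) 1) := convex_Icc _ _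
  have hcont : Continuous (fun t : ℝ => t • c + (1-t) • x) := by continuity
  have htend : Filter.Tendsto (fun t : ℝ => t • c + (1-t) • x) (nhds 0) (nhds x) := by
    have := hcont.tendsto 0
    simpa using this
  have hev : ∀ᶠ t : ℝ in nhds 0, (t • c + (1-t) • x) ∈ U := htend.eventually (hU.mem_nhds hxU)
  have hev2 : ∀ᶠ t : ℝ in nhds 0, t < 1 := Filter.tendsto_id.eventually_lt_const (by norm_num)
  have hev3 : ∀ᶠ t : ℝ in nhdsWithin 0 (Ioi 0),
      (t • c + (1-t) • x) ∈ U ∧ t < 1 ∧ 0 < t := by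
    filter_upwards [nhdsWithin_le_nhds (hev.and hev2), self_mem_nhdsWithin] with t h1 h2
    exact ⟨h1.1, h1.2, h2⟩
  obtain ⟨t, htU, ht1, ht0⟩ := hev3.exists
  have hz : (t • c + (1-t) • x) ∈ interior (Icc (0 : Fin d → ℝ) 1) :=
    hconv.combo_interior_closure_mem_interior hcI (subset_closure hx) ht0 (by linarith) (by ring)
  have hWopen : IsOpen (U ∩ interior (Icc (0 : Fin d → ℝ) 1)) := hU.inter isOpen_interior
  have hWne : (U ∩ interior (Icc (0 : Fin d → ℝ) 1)).Nonempty := ⟨_, htU, hz⟩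
  calc (0:ℝ≥0∞) < volume (U ∩ interior (Icc (0 : Fin d → ℝ) 1)) := hWopen.measure_pos volume hWne
    _ ≤ volume (U ∩ Icc (0 : Fin d → ℝ) 1) := measure_mono (inter_subset_inter_right _ interior_subset)

lemma eqOn_of_ae {F G : (Fin d → ℝ) → ℝ} (hF : Continuous F) (hG : Continuous G)
    (h : ∀ᵐ x ∂(volume.restrict (Icc (0 : Fin d → ℝ) 1)), F x = G x) :
    ∀ x ∈ Icc (0 : Fin d → ℝ) 1, F x = G x := by
  have hclosed : IsClosed {y | F y = G y} := isClosed_eq hF hG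
  have hmeas : MeasurableSet {y : Fin d → ℝ | ¬ F y = G y} := by
    have : IsOpen {y | F y = G y}ᶜ := hclosed.isOpen_compl
    exact this.measurableSet
  have hnull : volume ({y : Fin d → ℝ | ¬ F y = G y} ∩ Icc 0 1) = 0 := by
    have h0 := ae_iff.mp h
    rwa [Measure.restrict_apply hmeas] at h0
  intro x hx
  have : x ∈ closure {y | F y = G y} := by
    rw [mem_closure_iff]
    intro U hU hxU
    by_contra hemp
    push_neg at hemp
    have hsub : U ∩ Icc (0 : Fin d → ℝ) 1 ⊆ {y : Fin d → ℝ | ¬ F y = G y} ∩ Icc 0 1 := by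
      rintro y ⟨hyU, hyI⟩
      refine ⟨fun heq => ?_, hyI⟩
      exact (eq_empty_iff_forall_notMem.mp hemp y) ⟨hyU, heq⟩
    have hle : volume (U ∩ Icc (0 : Fin d → ℝ) 1) ≤ volume ({y : Fin d → ℝ | ¬ F y = G y} ∩ Icc 0 1) := measure_mono hsub
    rw [hnull] at hle
    exact absurd (le_antisymm hle (zero_le)) (pos_vol hx hU hxU).ne'
  rwa [hclosed.closure_eq] at this

lemma measurableSpace_pi_eq :
    (inferInstance : MeasurableSpace (Fin d → ℝ)) =
      MeasurableSpace.generateFrom (range (Iic : (Fin d → ℝ) → Set (Fin d → ℝ))) := by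
  have h1 : ∀ _i : Fin d, IsCountablySpanning (range (Iic : ℝ → Set ℝ)) := by
    intro _
    refine ⟨fun n => Iic (n : ℝ), fun n => mem_range_self _, ?_⟩
    ext y
    simp only [mem_iUnion, mem_Iic, mem_univ, iff_true]
    exact exists_nat_ge y
  have hR : (inferInstance : MeasurableSpace ℝ) =
      MeasurableSpace.generateFrom (range (Iic : ℝ → Set ℝ)) :=
    BorelSpace.measurable_eq.trans (borel_eq_generateFrom_Iic ℝ)
  have h2 := generateFrom_pi_eq h1 (α := fun _ : Fin d => ℝ)
  have himg : Set.pi univ '' Set.pi univ (fun _ : Fin d => range (Iic : ℝ → Set ℝ))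
      = range (Iic : (Fin d → ℝ) → Set (Fin d → ℝ)) := by
    ext s
    constructor
    · rintro ⟨t, ht, rfl⟩
      choose a ha using fun i => ht i (mem_univ i)
      refine ⟨fun i => a i, ?_⟩
      have ht' : t = fun i => Iic (a i) := funext fun i => (ha i).symm
      rw [ht', pi_univ_Iic]
    · rintro ⟨a, rfl⟩
      exact ⟨fun i => Iic (a i), fun i _ => mem_range_self _, pi_univ_Iic a⟩
  have : (inferInstance : MeasurableSpace (Fin d → ℝ)) =
      (@MeasurableSpace.pi _ (fun _ : Fin d => ℝ)
        (fun _ => MeasurableSpace.generateFrom (range (Iic : ℝ → Set ℝ)))) := by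
    show MeasurableSpace.pi = _
    congr 1
    funext _
    exact hR
  rw [this, h2, himg]

/-- For a measurable partition `Ω_1,…,Ω_N` of `[0,1]^d` into sets of positive volume,
the expected proportion `(1/N) ∑ |Ω_i ∩ [0,x]|/|Ω_i|` equals `|[0,x]|` for almost
every `x ∈ [0,1]^d` if and only if the partition is equivolume. -/
theorem stmt1 (d N : ℕ) (hN : 1 ≤ N) (Ω : Fin N → Set (Fin d → ℝ))
    (hmeas : ∀ i, MeasurableSet (Ω i))
    (hpos : ∀ i, 0 < volume (Ω i))
    (hcover : (⋃ i, Ω i) = Set.Icc (0 : Fin d → ℝ) 1)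
    (hdisj : ∀ i j, i ≠ j → volume (Ω i ∩ Ω j) = 0) :
    (∀ᵐ x ∂(volume.restrict (Set.Icc (0 : Fin d → ℝ) 1)),
        (1 / (N : ℝ)) * ∑ i, (volume (Ω i ∩ Set.Icc 0 x)).toReal / (volume (Ω i)).toReal
          = (volume (Set.Icc (0 : Fin d → ℝ) x)).toReal)
      ↔ (∀ i, volume (Ω i) = 1 / (N : ℝ≥0∞)) := by
  have hN0 : (N : ℝ) ≠ 0 := Nat.cast_ne_zero.mpr (by omega)
  have hsubcube : ∀ i, Ω i ⊆ Icc (0 : Fin d → ℝ) 1 := fun i => hcover ▸ subset_iUnion Ω i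
  have hfin : ∀ i, volume (Ω i) ≠ ∞ := fun i =>
    (lt_of_le_of_lt (measure_mono (hsubcube i)) (vol_Icc_ne_top 1).lt_top).ne
  have hvol1 : volume (Icc (0 : Fin d → ℝ) 1) = 1 := by
    rw [Real.volume_Icc_pi]; simp
  constructor
  · -- forward
    intro h i
    set F : (Fin d → ℝ) → ℝ := fun x =>
      (1 / (N : ℝ)) * ∑ j, (volume (Ω j ∩ Icc 0 x)).toReal / (volume (Ω j)).toReal with hF
    have hFc : Continuous F :=
      continuous_const.mul (continuous_finset_sum _ fun j _ => (contF (Ω j) (hfin j)).div_const _)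
    have hEq : ∀ x ∈ Icc (0 : Fin d → ℝ) 1, F x = (volume (Icc (0 : Fin d → ℝ) x)).toReal :=
      eqOn_of_ae hFc contV h
    set c : Fin N → ℝ≥0∞ := fun j => ((N : ℝ≥0∞) * volume (Ω j))⁻¹ with hc
    have hNtop : (N : ℝ≥0∞) ≠ ∞ := ENNReal.natCast_ne_top N
    have hNne : (N : ℝ≥0∞) ≠ 0 := Nat.cast_ne_zero.mpr (by omega)
    have hcne : ∀ j, (N : ℝ≥0∞) * volume (Ω j) ≠ 0 := fun j => mul_ne_zero hNne (hpos j).ne'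
    have hctop : ∀ j, c j ≠ ∞ := fun j => ENNReal.inv_ne_top.mpr (hcne j)
    set κ : Measure (Fin d → ℝ) := ∑ j, c j • (volume.restrict (Ω j)) with hκ
    have hκapp : ∀ s : Set (Fin d → ℝ), MeasurableSet s → κ s = ∑ j, c j * volume (s ∩ Ω j) := by
      intro s hs
      rw [hκ, Measure.finset_sum_apply]
      exact Finset.sum_congr rfl fun j _ => by
        rw [Measure.smul_apply, Measure.restrict_apply hs, smul_eq_mul]
    have hcv : ∀ j, c j * volume (Ω j) = (N : ℝ≥0∞)⁻¹ := by
      intro j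
      show ((N : ℝ≥0∞) * volume (Ω j))⁻¹ * volume (Ω j) = (N : ℝ≥0∞)⁻¹
      rw [ENNReal.mul_inv (Or.inl hNne) (Or.inl hNtop), mul_assoc,
        ENNReal.inv_mul_cancel (hpos j).ne' (hfin j), mul_one]
    have hκuniv : κ univ = 1 := by
      rw [hκapp univ MeasurableSet.univ]
      simp only [univ_inter]
      rw [Finset.sum_congr rfl fun j _ => hcv j, Finset.sum_const, Finset.card_univ,
        Fintype.card_fin, nsmul_eq_mul, ENNReal.mul_inv_cancel hNne hNtop]
    haveI : IsFiniteMeasure κ := ⟨by rw [hκuniv]; exact ENNReal.one_lt_top⟩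
    have hκIcc : ∀ z : Fin d → ℝ, z ∈ Icc (0 : Fin d → ℝ) 1 → κ (Icc 0 z) = volume (Icc 0 z) := by
      intro z hz
      have hfs : ∀ j, c j * volume (Icc 0 z ∩ Ω j) ≠ ∞ := fun j =>
        ENNReal.mul_ne_top (hctop j)
          ((lt_of_le_of_lt (measure_mono inter_subset_right) (hfin j).lt_top).ne)
      have hκfin : κ (Icc 0 z) ≠ ∞ := by
        rw [hκapp _ measurableSet_Icc]
        exact (ENNReal.sum_lt_top.mpr fun j _ => (hfs j).lt_top).ne
      have htoReal : (κ (Icc 0 z)).toReal = F z := by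
        rw [hκapp _ measurableSet_Icc, ENNReal.toReal_sum (fun j _ => hfs j)]
        show _ = 1 / (N : ℝ) * ∑ j, (volume (Ω j ∩ Icc 0 z)).toReal / (volume (Ω j)).toReal
        rw [Finset.mul_sum]
        refine Finset.sum_congr rfl fun j _ => ?_
        show (((N : ℝ≥0∞) * volume (Ω j))⁻¹ * volume (Icc 0 z ∩ Ω j)).toReal = _
        rw [ENNReal.toReal_mul, ENNReal.toReal_inv, ENNReal.toReal_mul, inter_comm]
        simp only [ENNReal.toReal_natCast]
        rw [mul_inv, one_div, div_eq_mul_inv]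
        ring
      have h2 : (κ (Icc 0 z)).toReal = (volume (Icc 0 z)).toReal := by
        rw [htoReal, hEq z hz]
      exact (ENNReal.toReal_eq_toReal_iff' hκfin (vol_Icc_ne_top z)).mp h2
    have hIic : ∀ x : Fin d → ℝ, κ (Iic x) = (volume.restrict (Icc (0 : Fin d → ℝ) 1)) (Iic x) := by
      intro x
      have hset : ∀ (s : Set (Fin d → ℝ)), s ⊆ Icc (0 : Fin d → ℝ) 1 →
          Iic x ∩ s = Icc 0 (x ⊓ 1) ∩ s := by
        intro s hs
        ext y
        constructor
        · rintro ⟨hy1, hy2⟩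
          exact ⟨⟨(hs hy2).1, le_inf hy1 (hs hy2).2⟩, hy2⟩
        · rintro ⟨hy1, hy2⟩
          exact ⟨le_trans hy1.2 inf_le_left, hy2⟩
      have hρ : (volume.restrict (Icc (0 : Fin d → ℝ) 1)) (Iic x) = volume (Icc 0 (x ⊓ 1)) := by
        rw [Measure.restrict_apply measurableSet_Iic, hset _ (subset_refl _),
          inter_eq_self_of_subset_left (Icc_subset_Icc_right inf_le_right)]
      have hκI : κ (Iic x) = κ (Icc 0 (x ⊓ 1)) := by
        rw [hκapp _ measurableSet_Iic, hκapp _ measurableSet_Icc]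
        exact Finset.sum_congr rfl fun j _ => by rw [hset (Ω j) (hsubcube j)]
      rw [hκI, hρ]
      by_cases h0 : (0 : Fin d → ℝ) ≤ x ⊓ 1
      · exact hκIcc _ ⟨h0, inf_le_right⟩
      · rw [Icc_eq_empty h0]
        simp
    have hκeq : κ = volume.restrict (Icc (0 : Fin d → ℝ) 1) := by
      refine MeasureTheory.ext_of_generate_finite
        (range (Iic : (Fin d → ℝ) → Set (Fin d → ℝ))) measurableSpace_pi_eq ?_ ?_ ?_
      · rintro s ⟨a, rfl⟩ t ⟨b, rfl⟩ -
        rw [Iic_inter_Iic]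
        exact mem_range_self _
      · rintro s ⟨x, rfl⟩
        exact hIic x
      · rw [hκuniv, Measure.restrict_apply_univ, hvol1]
    have hfinal : κ (Ω i) = (volume.restrict (Icc (0 : Fin d → ℝ) 1)) (Ω i) := by rw [hκeq]
    rw [hκapp _ (hmeas i), Measure.restrict_apply (hmeas i),
      inter_eq_self_of_subset_left (hsubcube i)] at hfinal
    rw [Finset.sum_eq_single i
      (fun j _ hj => by rw [inter_comm, hdisj j i hj, mul_zero])
      (by simp)] at hfinal
    rw [inter_self] at hfinal
    rw [hcv i] at hfinal
    rw [one_div]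
    exact hfinal.symm
  · -- backward
    intro h
    have hsum : ∀ (A : Set (Fin d → ℝ)), MeasurableSet A → A ⊆ Icc (0 : Fin d → ℝ) 1 →
        ∑ i, volume (Ω i ∩ A) = volume A := by
      intro A hAm hAs
      have hU : ⋃ i, (Ω i ∩ A) = A := by
        rw [← iUnion_inter, hcover, inter_eq_self_of_subset_right hAs]
      have hae : Pairwise (Function.onFun (AEDisjoint volume) fun i => Ω i ∩ A) := by
        intro i j hij
        refine le_antisymm (le_trans (measure_mono ?_) (hdisj i j hij).le) (zero_le)
        intro y hy
        exact ⟨hy.1.1, hy.2.1⟩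
      have := measure_iUnion₀ hae (fun i => ((hmeas i).inter hAm).nullMeasurableSet)
      rw [hU, tsum_fintype] at this
      exact this.symm
    filter_upwards [ae_restrict_mem measurableSet_Icc] with x hx
    have hsub : Icc (0 : Fin d → ℝ) x ⊆ Icc 0 1 := Icc_subset_Icc_right hx.2
    have hkey := hsum (Icc 0 x) measurableSet_Icc hsub
    have hfint : ∀ i, volume (Ω i ∩ Icc 0 x) ≠ ∞ := fun i =>
      (lt_of_le_of_lt (measure_mono inter_subset_left) (hfin i).lt_top).ne
    have htR : (volume (Icc (0 : Fin d → ℝ) x)).toReal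
        = ∑ i, (volume (Ω i ∩ Icc 0 x)).toReal := by
      rw [← hkey, ENNReal.toReal_sum (fun i _ => hfint i)]
    have hden : ∀ i, (volume (Ω i)).toReal = (N : ℝ)⁻¹ := by
      intro i
      rw [h i, one_div, ENNReal.toReal_inv]
      simp
    rw [htR]
    have hterm : ∀ i : Fin N, (volume (Ω i ∩ Icc 0 x)).toReal / (volume (Ω i)).toReal
        = (N : ℝ) * (volume (Ω i ∩ Icc 0 x)).toReal := by
      intro i
      rw [hden i, div_eq_mul_inv, inv_inv, mul_comm]
    rw [Finset.sum_congr rfl fun i _ => hterm i, ← Finset.mul_sum, one_div, ← mul_assoc,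
      inv_mul_cancel₀ hN0, one_mul]
end

section
/- Let N ≥ 2, p > 1, and let Z be a random variable such that NZ is a sum of N independent Bernoulli random variables with success probabilities q_1,...,q_N ∈ [0,1], and let U be a random variable such that NU is binomial with N trials and success probability q̄ = (q_1+...+q_N)/N. Then E|Z − E Z|^p ≤ E|U − E U|^p, with equality if and only if q_1 = q_2 = ... = q_N. -/
open MeasureTheory Set
open scoped ENNReal

/-- The Bernoulli measure on `Bool` with success probability `p`. -/
noncomputable def bern (p : ℝ) : Measure Bool :=
  ENNReal.ofReal p • Measure.dirac true + ENNReal.ofReal (1 - p) • Measure.dirac false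

/-- The number of successes among the `N` trials, divided by `N`. -/
noncomputable def frac {N : ℕ} (ω : Fin N → Bool) : ℝ :=
  (∑ i, if ω i then (1 : ℝ) else 0) / N

noncomputable def W {N : ℕ} (q : Fin N → ℝ) (ω : Fin N → Bool) : ℝ :=
  ∏ i, if ω i then q i else 1 - q i

noncomputable def F {N : ℕ} (g : ℝ → ℝ) (q : Fin N → ℝ) : ℝ :=
  ∑ ω : Fin N → Bool, W q ω * g (frac ω)

open Finset Function

variable {N : ℕ}


lemma strictConvexOn_abs_rpow {p : ℝ} (hp : 1 < p) :
    StrictConvexOn ℝ univ fun x : ℝ => |x| ^ p := by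
  have hp0 : 0 < p := lt_trans one_pos hp
  refine ⟨convex_univ, ?_⟩
  rintro x - y - hxy a b ha hb hab
  rcases eq_or_ne |x| |y| with habs | habs
  · -- then x = -y (x ≠ y), and |y| > 0
    have hxney : x = -y := by
      rcases abs_eq_abs.1 habs with h | h
      · exact absurd h hxy
      · exact h
    have hy0 : y ≠ 0 := by rintro rfl; simp [hxney] at hxy
    have hylt : |a • x + b • y| < |y| := by
      rw [hxney]
      have : a • (-y) + b • y = (b - a) * y := by simp [smul_eq_mul]; ring
      rw [this, abs_mul]
      have hba : |b - a| < 1 := by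
        rw [abs_lt]; constructor <;> nlinarith
      calc |b - a| * |y| < 1 * |y| := by
            exact mul_lt_mul_of_pos_right hba (abs_pos.2 hy0)
        _ = |y| := one_mul _
    calc |a • x + b • y| ^ p < |y| ^ p :=
          Real.rpow_lt_rpow (abs_nonneg _) hylt hp0
      _ = a * |y| ^ p + b * |y| ^ p := by rw [← add_mul, hab, one_mul]
      _ = a * |x| ^ p + b * |y| ^ p := by rw [habs]
  · have h1 : |a • x + b • y| ^ p ≤ (a * |x| + b * |y|) ^ p := by
      apply Real.rpow_le_rpow (abs_nonneg _) _ hp0.le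
      calc |a • x + b • y| ≤ |a • x| + |b • y| := abs_add_le _ _
        _ = a * |x| + b * |y| := by
            rw [smul_eq_mul, smul_eq_mul, abs_mul, abs_mul, abs_of_pos ha, abs_of_pos hb]
    have h2 : (a * |x| + b * |y|) ^ p < a * |x| ^ p + b * |y| ^ p := by
      have := (strictConvexOn_rpow hp).2 (mem_Ici.2 (abs_nonneg x)) (mem_Ici.2 (abs_nonneg y))
        habs ha hb hab
      simpa using this
    exact lt_of_le_of_lt h1 h2

-- second difference
lemma secdiff {p : ℝ} (hp : 1 < p) (m : ℝ) {h : ℝ} (hh : 0 < h) (t : ℝ) :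
    2 * |t + h - m| ^ p < |t - m| ^ p + |t + 2*h - m| ^ p := by
  have key := (strictConvexOn_abs_rpow hp).2 (Set.mem_univ (t - m)) (Set.mem_univ (t + 2*h - m))
    (by intro hc; nlinarith [hc]) (by norm_num : (0:ℝ) < 1/2) (by norm_num : (0:ℝ) < 1/2)
    (by norm_num)
  have : (1/2 : ℝ) • (t - m) + (1/2 : ℝ) • (t + 2*h - m) = t + h - m := by
    simp [smul_eq_mul]; ring
  rw [this] at key
  simp only [smul_eq_mul] at key
  nlinarith [key]

-- grouping lemma
lemma sum_group (hij : i ≠ j) (h : (Fin N → Bool) → ℝ) :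
    ∑ ω, h ω = ∑ ω ∈ univ.filter (fun ω => ω i = false ∧ ω j = false),
      (h ω + h (update ω i true) + h (update ω j true)
        + h (update (update ω i true) j true)) := by
  classical
  set Φ : (Fin N → Bool) → (Fin N → Bool) := fun ω => update (update ω i false) j false with hΦ
  have hΦi : ∀ ω, Φ ω i = false := by
    intro ω; simp only [hΦ, update_of_ne hij, update_self]
  have hΦj : ∀ ω, Φ ω j = false := by
    intro ω; simp only [hΦ, update_self]
  have hΦk : ∀ ω k, k ≠ i → k ≠ j → Φ ω k = ω k := by
    intro ω k hki hkj; simp only [hΦ, update_of_ne hkj, update_of_ne hki]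
  rw [← Finset.sum_fiberwise_of_maps_to (g := Φ) (t := univ) (fun _ _ => Finset.mem_univ _) h]
  rw [← Finset.sum_filter_add_sum_filter_not univ (fun ω => ω i = false ∧ ω j = false)]
  have hz : ∑ ω' ∈ univ.filter (fun ω => ¬(ω i = false ∧ ω j = false)),
      ∑ ω ∈ univ.filter (fun ω => Φ ω = ω'), h ω = 0 := by
    apply Finset.sum_eq_zero
    intro ω' hω'
    simp only [Finset.mem_filter, Finset.mem_univ, true_and] at hω'
    apply Finset.sum_eq_zero
    intro ω hω
    simp only [Finset.mem_filter, Finset.mem_univ, true_and] at hω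
    exfalso
    apply hω'
    rw [← hω]
    exact ⟨hΦi ω, hΦj ω⟩
  rw [hz, add_zero]
  apply Finset.sum_congr rfl
  intro ω' hω'
  simp only [Finset.mem_filter, Finset.mem_univ, true_and] at hω'
  obtain ⟨h'i, h'j⟩ := hω'
  -- fiber = explicit four-element set
  have hupd : ∀ b1 b2 : Bool, Φ (update (update ω' i b1) j b2) = ω' := by
    intro b1 b2
    funext k
    by_cases hki : k = i
    · subst hki; rw [hΦi, h'i]
    · by_cases hkj : k = j
      · subst hkj; rw [hΦj, h'j]
      · rw [hΦk _ _ hki hkj, update_of_ne hkj, update_of_ne hki]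
  have hfiber : univ.filter (fun ω => Φ ω = ω')
      = {update (update ω' i false) j false, update (update ω' i true) j false,
         update (update ω' i false) j true, update (update ω' i true) j true} := by
    ext ω
    simp only [Finset.mem_filter, Finset.mem_univ, true_and, Finset.mem_insert, Finset.mem_singleton]
    constructor
    · intro hΦω
      have hrepr : ω = update (update ω' i (ω i)) j (ω j) := by
        funext k
        by_cases hkj : k = j
        · subst hkj; rw [update_self]
        · by_cases hki : k = i
          · subst hki; rw [update_of_ne hij, update_self]
          · rw [update_of_ne hkj, update_of_ne hki, ← hΦω, hΦk _ _ hki hkj]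
      rcases Bool.dichotomy (ω i) with hbi | hbi <;> rcases Bool.dichotomy (ω j) with hbj | hbj <;>
        rw [hbi, hbj] at hrepr
      · exact Or.inl hrepr
      · exact Or.inr (Or.inr (Or.inl hrepr))
      · exact Or.inr (Or.inl hrepr)
      · exact Or.inr (Or.inr (Or.inr hrepr))
    · rintro (rfl | rfl | rfl | rfl) <;> exact hupd _ _
  rw [hfiber]
  have e1 : update (update ω' i false) j false = ω' := by
    funext k
    by_cases hkj : k = j
    · subst hkj; rw [update_self, h'j]
    · by_cases hki : k = i
      · subst hki; rw [update_of_ne hij, update_self, h'i]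
      · rw [update_of_ne hkj, update_of_ne hki]
  have e2 : update (update ω' i true) j false = update ω' i true := by
    funext k
    by_cases hkj : k = j
    · subst hkj; rw [update_self, update_of_ne (Ne.symm hij), h'j]
    · rw [update_of_ne hkj]
  have e3 : update (update ω' i false) j true = update ω' j true := by
    funext k
    by_cases hkj : k = j
    · subst hkj; rw [update_self, update_self]
    · rw [update_of_ne hkj, update_of_ne hkj]
      by_cases hki : k = i
      · subst hki; rw [update_self, h'i]
      · rw [update_of_ne hki]
  rw [e1, e2, e3]
  -- distinctness
  have dBi : (update ω' i true) i = true := update_self _ _ _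
  have dDj : (update (update ω' i true) j true) j = true := update_self _ _ _
  have dDi : (update (update ω' i true) j true) i = true := by
    rw [update_of_ne hij, update_self]
  have dCj : (update ω' j true) j = true := update_self _ _ _
  have dCi : (update ω' j true) i = ω' i := update_of_ne (fun hc => hij hc) _ _
  have dBj : (update ω' i true) j = ω' j := update_of_ne (fun hc => hij hc.symm) _ _
  have n1 : ω' ≠ update ω' i true := fun hc => by
    rw [hc] at h'i; rw [dBi] at h'i; simp at h'i
  have n2 : ω' ≠ update ω' j true := fun hc => by
    rw [hc] at h'j; rw [dCj] at h'j; simp at h'j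
  have n3 : ω' ≠ update (update ω' i true) j true := fun hc => by
    rw [hc] at h'i; rw [dDi] at h'i; simp at h'i
  have n4 : update ω' i true ≠ update ω' j true := fun hc => by
    have := congrFun hc i; rw [dBi, dCi, h'i] at this; simp at this
  have n5 : update ω' i true ≠ update (update ω' i true) j true := fun hc => by
    have := congrFun hc j; rw [dBj, dDj, h'j] at this; simp at this
  have n6 : update ω' j true ≠ update (update ω' i true) j true := fun hc => by
    have := congrFun hc i; rw [dCi, dDi, h'i] at this; simp at this
  rw [Finset.sum_insert (by simp [n1, n2, n3]), Finset.sum_insert (by simp [n4, n5]),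
    Finset.sum_insert (by simp [n6]), Finset.sum_singleton]
  ring

lemma sum_W (q : Fin N → ℝ) : ∑ ω, W q ω = 1 := by
  classical
  have := Finset.prod_univ_sum (fun _ : Fin N => (univ : Finset Bool))
    (fun i b => if b then q i else 1 - q i)
  rw [Fintype.piFinset_univ] at this
  unfold W
  rw [← this]
  rw [Finset.prod_eq_one]
  intro i _
  simp

lemma W_factor {i j : Fin N} (hij : i ≠ j) (r : Fin N → ℝ) (ω : Fin N → Bool) :
    W r ω = (if ω i then r i else 1 - r i) * ((if ω j then r j else 1 - r j)
      * ∏ k ∈ (univ.erase i).erase j, (if ω k then r k else 1 - r k)) := by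
  unfold W
  rw [← Finset.mul_prod_erase univ _ (Finset.mem_univ i),
    ← Finset.mul_prod_erase (univ.erase i) _ (Finset.mem_erase.2 ⟨Ne.symm hij, Finset.mem_univ j⟩),
    Finset.erase_right_comm]

lemma prod_erase_update {i j : Fin N} (r : Fin N → ℝ) (ω : Fin N → Bool) (b : Bool) (l : Fin N)
    (hl : l = i ∨ l = j) :
    ∏ k ∈ (univ.erase i).erase j, (if update ω l b k then r k else 1 - r k)
      = ∏ k ∈ (univ.erase i).erase j, (if ω k then r k else 1 - r k) := by
  apply Finset.prod_congr rfl
  intro k hk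
  simp only [Finset.mem_erase] at hk
  have hkl : k ≠ l := by rcases hl with rfl | rfl; exacts [hk.2.1, hk.1]
  rw [update_of_ne hkl]

lemma frac_update_true {i : Fin N} (ω : Fin N → Bool) (hωi : ω i = false) :
    frac (update ω i true) = frac ω + 1 / N := by
  unfold frac
  have hN : (0:ℕ) < N := i.pos
  rw [← add_div]
  congr 1
  have : (fun k => if update ω i true k then (1:ℝ) else 0)
      = update (fun k => if ω k then (1:ℝ) else 0) i 1 := by
    funext k
    by_cases hk : k = i
    · subst hk; rw [update_self, update_self]; simp
    · rw [update_of_ne hk, update_of_ne hk]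
  rw [this, Finset.sum_update_of_mem (Finset.mem_univ i)]
  rw [← Finset.add_sum_erase univ _ (Finset.mem_univ i), hωi]
  simp [Finset.sdiff_singleton_eq_erase, add_comm]

/-- the residual weight over coordinates other than `i, j` -/
noncomputable def R (i j : Fin N) (q : Fin N → ℝ) (ω : Fin N → Bool) : ℝ :=
  ∏ k ∈ (univ.erase i).erase j, (if ω k then q k else 1 - q k)

lemma F_pair {i j : Fin N} (hij : i ≠ j) (g : ℝ → ℝ) (q : Fin N → ℝ) (x y : ℝ) :
    F g (update (update q i x) j y)
      = ∑ ω ∈ univ.filter (fun ω => ω i = false ∧ ω j = false),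
          R i j q ω * ((1-x)*(1-y)*g (frac ω) + (x*(1-y)+(1-x)*y)*g (frac ω + 1/N)
            + x*y*g (frac ω + 2/N)) := by
  classical
  unfold F
  rw [sum_group hij]
  apply Finset.sum_congr rfl
  intro ω hω
  simp only [Finset.mem_filter, Finset.mem_univ, true_and] at hω
  obtain ⟨hωi, hωj⟩ := hω
  set r := update (update q i x) j y with hr
  have hri : r i = x := by rw [hr, update_of_ne hij, update_self]
  have hrj : r j = y := by rw [hr, update_self]
  have hRr : ∀ ω'' : Fin N → Bool,
      (∏ k ∈ (univ.erase i).erase j, (if ω'' k then r k else 1 - r k)) = R i j q ω'' := by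
    intro ω''
    apply Finset.prod_congr rfl
    intro k hk
    simp only [Finset.mem_erase] at hk
    rw [hr, update_of_ne hk.1, update_of_ne hk.2.1]
  -- boolean coordinates of the four variants
  have hBi : (update ω i true) i = true := update_self _ _ _
  have hBj : (update ω i true) j = false := by rw [update_of_ne (Ne.symm hij), hωj]
  have hCi : (update ω j true) i = false := by rw [update_of_ne hij, hωi]
  have hCj : (update ω j true) j = true := update_self _ _ _
  have hDi : (update (update ω i true) j true) i = true := by
    rw [update_of_ne hij, update_self]
  have hDj : (update (update ω i true) j true) j = true := update_self _ _ _
  -- frac of the four variants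
  have hfB : frac (update ω i true) = frac ω + 1/N := frac_update_true ω hωi
  have hfC : frac (update ω j true) = frac ω + 1/N := frac_update_true ω hωj
  have hfD : frac (update (update ω i true) j true) = frac ω + 2/N := by
    rw [frac_update_true _ hBj, hfB]; ring
  -- residual weights of the four variants
  have hRB : R i j q (update ω i true) = R i j q ω := prod_erase_update q ω true i (Or.inl rfl)
  have hRC : R i j q (update ω j true) = R i j q ω := prod_erase_update q ω true j (Or.inr rfl)
  have hRD : R i j q (update (update ω i true) j true) = R i j q ω := by
    rw [show R i j q (update (update ω i true) j true)
        = ∏ k ∈ (univ.erase i).erase j, (if update (update ω i true) j true k then q k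
          else 1 - q k) from rfl,
      prod_erase_update q (update ω i true) true j (Or.inr rfl)]
    exact prod_erase_update q ω true i (Or.inl rfl)
  rw [W_factor hij r ω, W_factor hij r (update ω i true), W_factor hij r (update ω j true),
    W_factor hij r (update (update ω i true) j true)]
  rw [hRr ω, hRr (update ω i true), hRr (update ω j true), hRr (update (update ω i true) j true)]
  rw [hRB, hRC, hRD, hfB, hfC, hfD]
  rw [hωi, hωj, hBi, hBj, hCi, hCj, hDi, hDj, hri, hrj]
  simp only [if_true, if_false, Bool.false_eq_true]
  ring

lemma R_nonneg {i j : Fin N} {q : Fin N → ℝ} (hq0 : ∀ k, 0 ≤ q k) (hq1 : ∀ k, q k ≤ 1)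
    (ω : Fin N → Bool) : 0 ≤ R i j q ω := by
  apply Finset.prod_nonneg
  intro k _
  split <;> [exact hq0 k; linarith [hq1 k]]

lemma sum_R_eq_one {i j : Fin N} (hij : i ≠ j) (q : Fin N → ℝ) :
    ∑ ω ∈ univ.filter (fun ω => ω i = false ∧ ω j = false), R i j q ω = 1 := by
  have h := F_pair hij (fun _ => (1:ℝ)) q 0 0
  have hF1 : F (fun _ => (1:ℝ)) (update (update q i 0) j 0) = 1 := by
    unfold F; simp only [mul_one]; exact sum_W _
  rw [hF1] at h
  refine Eq.trans ?_ h.symm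
  apply Finset.sum_congr rfl
  intro ω _
  ring

/-- the balancing identity -/
lemma F_balance {i j : Fin N} (hij : i ≠ j) (g : ℝ → ℝ) (q : Fin N → ℝ) :
    F g (update (update q i ((q i + q j)/2)) j ((q i + q j)/2)) - F g q
      = ((q i - q j)/2)^2 *
        ∑ ω ∈ univ.filter (fun ω => ω i = false ∧ ω j = false),
          R i j q ω * (g (frac ω) - 2 * g (frac ω + 1/N) + g (frac ω + 2/N)) := by
  have hq : F g q = F g (update (update q i (q i)) j (q j)) := by
    rw [update_eq_self, update_eq_self]
  rw [hq, F_pair hij g q, F_pair hij g q, Finset.mul_sum, ← Finset.sum_sub_distrib]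
  apply Finset.sum_congr rfl
  intro ω _
  ring

/-- strict increase under balancing -/
lemma F_balance_lt {i j : Fin N} (hij : i ≠ j) {g : ℝ → ℝ}
    (hg : ∀ t : ℝ, 2 * g (t + 1/N) < g t + g (t + 2/N))
    {q : Fin N → ℝ} (hq0 : ∀ k, 0 ≤ q k) (hq1 : ∀ k, q k ≤ 1) (hne : q i ≠ q j) :
    F g q < F g (update (update q i ((q i + q j)/2)) j ((q i + q j)/2)) := by
  have hD : 0 < ∑ ω ∈ univ.filter (fun ω => ω i = false ∧ ω j = false),
      R i j q ω * (g (frac ω) - 2 * g (frac ω + 1/N) + g (frac ω + 2/N)) := by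
    apply Finset.sum_pos'
    · intro ω _
      apply mul_nonneg (R_nonneg hq0 hq1 ω)
      linarith [hg (frac ω)]
    · -- some ω has positive residual weight
      have hpos : ∃ ω ∈ univ.filter (fun ω : Fin N → Bool => ω i = false ∧ ω j = false),
          0 < R i j q ω := by
        by_contra hc
        push_neg at hc
        have : ∑ ω ∈ univ.filter (fun ω : Fin N → Bool => ω i = false ∧ ω j = false),
            R i j q ω ≤ 0 := Finset.sum_nonpos fun ω hω => hc ω hω
        rw [sum_R_eq_one hij q] at this
        linarith
      obtain ⟨ω, hω, hωpos⟩ := hpos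
      exact ⟨ω, hω, mul_pos hωpos (by linarith [hg (frac ω)])⟩
  have hsub : q i - q j ≠ 0 := sub_ne_zero.2 hne
  have hsq : 0 < ((q i - q j)/2)^2 := by positivity
  have := F_balance hij g q
  nlinarith

lemma bern_singleton (p : ℝ) (b : Bool) :
    bern p {b} = ENNReal.ofReal (if b then p else 1 - p) := by
  cases b <;> simp [bern, Measure.dirac_apply' _ (measurableSet_singleton _)]

lemma bern_prob (p : ℝ) (h0 : 0 ≤ p) (h1 : p ≤ 1) : IsProbabilityMeasure (bern p) := by
  constructor
  simp [bern]
  rw [← ENNReal.ofReal_add h0 (by linarith)]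
  norm_num

lemma W_nonneg {N : ℕ} {q : Fin N → ℝ} (hq0 : ∀ i, 0 ≤ q i) (hq1 : ∀ i, q i ≤ 1)
    (ω : Fin N → Bool) : 0 ≤ W q ω := by
  apply Finset.prod_nonneg
  intro i _
  split <;> [exact hq0 i; linarith [hq1 i]]

lemma pi_bern_singleton {N : ℕ} (q : Fin N → ℝ) (hq0 : ∀ i, 0 ≤ q i) (hq1 : ∀ i, q i ≤ 1)
    (ω : Fin N → Bool) :
    (Measure.pi fun i => bern (q i)) {ω} = ENNReal.ofReal (W q ω) := by
  haveI : ∀ i, IsProbabilityMeasure (bern (q i)) := fun i => bern_prob _ (hq0 i) (hq1 i)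
  have : ({ω} : Set (Fin N → Bool)) = Set.univ.pi (fun i => {ω i}) := by
    ext ω'; simp [funext_iff, Set.mem_pi]
  rw [this, Measure.pi_pi]
  simp only [bern_singleton]
  rw [← ENNReal.ofReal_prod_of_nonneg]
  · rfl
  · intro i _; split <;> [exact hq0 i; linarith [hq1 i]]

lemma integral_eq_F {N : ℕ} (g : ℝ → ℝ) (q : Fin N → ℝ) (hq0 : ∀ i, 0 ≤ q i)
    (hq1 : ∀ i, q i ≤ 1) :
    (∫ ω, g (frac ω) ∂(Measure.pi fun i => bern (q i))) = F g q := by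
  haveI : ∀ i, IsProbabilityMeasure (bern (q i)) := fun i => bern_prob _ (hq0 i) (hq1 i)
  haveI : IsProbabilityMeasure (Measure.pi fun i => bern (q i)) := by infer_instance
  rw [integral_fintype (.of_finite)]
  unfold F
  congr 1
  ext ω
  rw [measureReal_def, pi_bern_singleton q hq0 hq1, ENNReal.toReal_ofReal (W_nonneg hq0 hq1 ω), smul_eq_mul]

lemma continuous_F (g : ℝ → ℝ) : Continuous (F (N := N) g) := by
  apply continuous_finset_sum
  intro ω _
  apply Continuous.mul _ continuous_const
  apply continuous_finset_prod
  intro i _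
  by_cases h : ω i
  · simp only [h, if_true]; exact continuous_apply i
  · simp only [h, if_false]; exact continuous_const.sub (continuous_apply i)

lemma sum_update_eq (f : Fin N → ℝ) (i : Fin N) (b : ℝ) :
    ∑ k, update f i b k = ∑ k, f k - f i + b := by
  rw [Finset.sum_update_of_mem (Finset.mem_univ i)]
  rw [Finset.sum_eq_sum_sdiff_singleton_add (Finset.mem_univ i) f]
  ring

lemma F_le_const (hN : 0 < N) {g : ℝ → ℝ}
    (hg : ∀ t : ℝ, 2 * g (t + 1/N) < g t + g (t + 2/N))
    (q : Fin N → ℝ) (hq0 : ∀ k, 0 ≤ q k) (hq1 : ∀ k, q k ≤ 1) :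
    F g q ≤ F g (fun _ : Fin N => (∑ i, q i)/N)
      ∧ (F g q = F g (fun _ : Fin N => (∑ i, q i)/N) ↔ ∀ i j, q i = q j) := by
  classical
  set S₀ : ℝ := ∑ i, q i with hS₀
  set m : ℝ := S₀ / N with hm
  set K : Set (Fin N → ℝ) :=
    (Set.pi Set.univ fun _ => Set.Icc (0:ℝ) 1) ∩ {r | ∑ i, r i = S₀} with hK
  have hmemK : ∀ r : Fin N → ℝ, ((∀ k, 0 ≤ r k ∧ r k ≤ 1) ∧ ∑ i, r i = S₀) → r ∈ K := by
    intro r hr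
    exact ⟨fun k _ => ⟨(hr.1 k).1, (hr.1 k).2⟩, hr.2⟩
  have hKdef : ∀ r ∈ K, (∀ k, 0 ≤ r k ∧ r k ≤ 1) ∧ ∑ i, r i = S₀ := by
    rintro r ⟨h1, h2⟩
    exact ⟨fun k => ⟨(h1 k (Set.mem_univ _)).1, (h1 k (Set.mem_univ _)).2⟩, h2⟩
  have hqK : q ∈ K := hmemK q ⟨fun k => ⟨hq0 k, hq1 k⟩, rfl⟩
  have hKc : IsCompact K :=
    (isCompact_univ_pi fun _ => isCompact_Icc).inter_right
      (isClosed_eq (continuous_finset_sum _ fun i _ => continuous_apply i) continuous_const)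
  -- balancing stays in K
  have hbalK : ∀ r ∈ K, ∀ i j : Fin N, i ≠ j →
      update (update r i ((r i + r j)/2)) j ((r i + r j)/2) ∈ K := by
    intro r hr i j hij
    obtain ⟨hr01, hrs⟩ := hKdef r hr
    apply hmemK
    constructor
    · intro k
      by_cases hkj : k = j
      · subst hkj
        rw [update_self]
        constructor
        · linarith [(hr01 i).1, (hr01 k).1]
        · linarith [(hr01 i).2, (hr01 k).2]
      · rw [update_of_ne hkj]
        by_cases hki : k = i
        · subst hki
          rw [update_self]
          constructor
          · linarith [(hr01 k).1, (hr01 j).1]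
          · linarith [(hr01 k).2, (hr01 j).2]
        · rw [update_of_ne hki]; exact hr01 k
    · rw [sum_update_eq, sum_update_eq]
      rw [update_of_ne (Ne.symm hij)]
      linarith [hrs]
  -- constant elements of K are the mean
  have hconstK : ∀ r ∈ K, (∀ i j : Fin N, r i = r j) → r = fun _ => m := by
    intro r hr hconst
    obtain ⟨-, hrs⟩ := hKdef r hr
    funext i
    have : ∑ k, r k = N * r i := by
      rw [Finset.sum_congr rfl fun k _ => hconst k i]
      simp [Finset.card_univ, mul_comm]
    rw [this] at hrs
    rw [hm, ← hrs]
    field_simp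
  have hmK : (fun _ : Fin N => m) ∈ K := by
    apply hmemK
    have h0S : 0 ≤ S₀ := Finset.sum_nonneg fun k _ => hq0 k
    have hSN : S₀ ≤ N := by
      calc S₀ ≤ ∑ _k : Fin N, (1:ℝ) := Finset.sum_le_sum fun k _ => hq1 k
        _ = N := by simp
    refine ⟨fun _ => ⟨?_, ?_⟩, ?_⟩
    · positivity
    · rw [hm]; rw [div_le_one (by exact_mod_cast hN)]; exact hSN
    · rw [Finset.sum_const, Finset.card_univ]
      simp [hm]
      field_simp
  -- maximization
  obtain ⟨r, hrK, hrmax⟩ := hKc.exists_isMaxOn ⟨q, hqK⟩ (continuous_F g).continuousOn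
  have hrconst : ∀ i j : Fin N, r i = r j := by
    by_contra hc
    push_neg at hc
    obtain ⟨i, j, hne⟩ := hc
    have hij : i ≠ j := fun h => hne (h ▸ rfl)
    obtain ⟨hr01, -⟩ := hKdef r hrK
    have hlt := F_balance_lt hij hg (fun k => (hr01 k).1) (fun k => (hr01 k).2) hne
    have hle := hrmax (hbalK r hrK i j hij)
    simp only [Set.mem_setOf_eq] at hle
    linarith
  have hrm : r = fun _ => m := hconstK r hrK hrconst
  have key : ∀ s ∈ K, F g s ≤ F g (fun _ : Fin N => m) := by
    intro s hs
    have := hrmax hs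
    rwa [hrm] at this
  constructor
  · exact key q hqK
  · constructor
    · intro heq
      by_contra hc
      push_neg at hc
      obtain ⟨i, j, hne⟩ := hc
      have hij : i ≠ j := fun h => hne (h ▸ rfl)
      have hlt := F_balance_lt hij hg hq0 hq1 hne
      have hle := key _ (hbalK q hqK i j hij)
      linarith [heq, hlt, hle]
    · intro hconst
      rw [hconstK q hqK hconst]


/-- Hoeffding's comparison: if `NZ` is a sum of `N` independent Bernoulli variables with
success probabilities `q_1,…,q_N` and `NU` is binomial with `N` trials and success
probability `q̄ = (q_1+⋯+q_N)/N`, then `E|Z − EZ|^p ≤ E|U − EU|^p` for `p > 1`, with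
equality iff all `q_i` are equal.  Here `Z` and `U` are realized canonically on
`(Fin N → Bool)` endowed with the product of Bernoulli measures. -/
theorem stmt3 (N : ℕ) (hN : 2 ≤ N) (p : ℝ) (hp : 1 < p)
    (q : Fin N → ℝ) (hq0 : ∀ i, 0 ≤ q i) (hq1 : ∀ i, q i ≤ 1) :
    (∫ ω, |frac ω - (∑ i, q i) / N| ^ p ∂(Measure.pi fun i => bern (q i)))
      ≤ (∫ ω, |frac ω - (∑ i, q i) / N| ^ p
          ∂(Measure.pi fun _ : Fin N => bern ((∑ i, q i) / N)))
    ∧ ((∫ ω, |frac ω - (∑ i, q i) / N| ^ p ∂(Measure.pi fun i => bern (q i)))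
        = (∫ ω, |frac ω - (∑ i, q i) / N| ^ p
            ∂(Measure.pi fun _ : Fin N => bern ((∑ i, q i) / N)))
      ↔ ∀ i j, q i = q j) := by
  have hN0 : 0 < N := lt_of_lt_of_le two_pos hN
  have hNR : (0:ℝ) < N := by exact_mod_cast hN0
  set m : ℝ := (∑ i, q i) / N with hm
  set g : ℝ → ℝ := fun x => |x - m| ^ p with hgdef
  have hm0 : 0 ≤ m := by
    apply div_nonneg _ hNR.le
    exact Finset.sum_nonneg fun k _ => hq0 k
  have hm1 : m ≤ 1 := by
    rw [hm, div_le_one hNR]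
    calc ∑ i, q i ≤ ∑ _i : Fin N, (1:ℝ) := Finset.sum_le_sum fun k _ => hq1 k
      _ = N := by simp
  have hg : ∀ t : ℝ, 2 * g (t + 1/N) < g t + g (t + 2/N) := by
    intro t
    have h2 : t + 2/N - m = t + 2*(1/N) - m := by ring
    simp only [hgdef]
    rw [h2]
    exact secdiff hp m (by positivity) t
  have hL : (∫ ω, |frac ω - (∑ i, q i) / N| ^ p ∂(Measure.pi fun i => bern (q i)))
      = F g q := integral_eq_F g q hq0 hq1
  have hR : (∫ ω, |frac ω - (∑ i, q i) / N| ^ p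
        ∂(Measure.pi fun _ : Fin N => bern ((∑ i, q i) / N)))
      = F g (fun _ : Fin N => m) :=
    integral_eq_F g (fun _ : Fin N => m) (fun _ => hm0) (fun _ => hm1)
  obtain ⟨hle, hiff⟩ := F_le_const hN0 hg q hq0 hq1
  rw [hL, hR]
  exact ⟨hle, hiff⟩
end
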